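/- Let A be a primitive axial algebra of Jordan type η over a field F with char F ≠ 2, let ℬ be a basis of A consisting of η-axes, and let (·,·) be the bilinear form on A determined by (b, c) = φ_b(c) for all b, c ∈ ℬ. Then for every η-axis a ∈ A, the eigenspaces A_1(a), A_0(a), A_η(a) of ad_a are pairwise orthogonal with respect to (·,·). -/

import Mathlib

/-!
For axes `a` and `b`, write `b = φ_a(b) a + b₀ + b_η` in the eigenspaces of `ad_a` and compare the
`a`-coordinate of `b(ba)` computed from this decomposition with the one computed from
`b(bu) = (1 - η) φ_b(u) b + η bu`; this gives `φ_a(b) (φ_a(b) - φ_b(a)) = 0`, hence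
`φ_a(b) = φ_b(a)`. So the form is symmetric on the basis, and `(c, u) = φ_c(u)` for every axis `c`,
not just for the basis axes. This makes `A₁(a) = F a` orthogonal to `A₀(a) ⊕ A_η(a)`, and makes the
form invariant under every automorphism (automorphisms permute the axes and preserve `φ`). The
Miyamoto involution of `a` fixes `A₀(a)` and negates `A_η(a)`, so `(x, y) = -(x, y)` for
`x ∈ A₀(a)`, `y ∈ A_η(a)`.
-/

universe u v

section Prelim

variable (F : Type u) {A : Type v} [Field F] [NonUnitalNonAssocCommRing A]
  [Module F A] [SMulCommClass F A A] [IsScalarTower F A A]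

/-- The λ-eigenspace of the adjoint map `ad_a : x ↦ a * x`. -/
def eigSp (a : A) (l : F) : Submodule F A where
  carrier := {x | a * x = l • x}
  add_mem' := by
    intro x y hx hy
    simp only [Set.mem_setOf_eq] at *
    rw [mul_add, hx, hy, smul_add]
  zero_mem' := by simp
  smul_mem' := by
    intro c x hx
    simp only [Set.mem_setOf_eq] at *
    rw [mul_smul_comm, hx, smul_smul, smul_smul, mul_comm]

/-- `a` is a (primitive) `η`-axis. -/
structure IsAxis (η : F) (a : A) : Prop where
  ne_zero : a ≠ 0
  idem : a * a = a
  decomp : eigSp F a 1 ⊔ eigSp F a 0 ⊔ eigSp F a η = ⊤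
  prim : eigSp F a 1 = Submodule.span F {a}
  f11 : ∀ x ∈ eigSp F a 1, ∀ y ∈ eigSp F a 1, x * y ∈ eigSp F a 1
  f00 : ∀ x ∈ eigSp F a 0, ∀ y ∈ eigSp F a 0, x * y ∈ eigSp F a 0
  f10 : ∀ x ∈ eigSp F a 1, ∀ y ∈ eigSp F a 0, x * y = 0
  fpe : ∀ x ∈ eigSp F a 1 ⊔ eigSp F a 0, ∀ y ∈ eigSp F a η, x * y ∈ eigSp F a η
  fee : ∀ x ∈ eigSp F a η, ∀ y ∈ eigSp F a η, x * y ∈ eigSp F a 1 ⊔ eigSp F a 0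

/-- `τ` is the Miyamoto involution of the `η`-axis `a`. -/
structure IsMiyamoto (η : F) (a : A) (τ : A → A) : Prop where
  fixes : ∀ x ∈ eigSp F a 1 ⊔ eigSp F a 0, τ x = x
  negates : ∀ x ∈ eigSp F a η, τ x = -x
  map_add : ∀ x y : A, τ (x + y) = τ x + τ y
  map_smul : ∀ (c : F) (x : A), τ (c • x) = c • τ x
  map_mul : ∀ x y : A, τ (x * y) = τ x * τ y
  bijective : Function.Bijective τ

/-- `c = φ_a(u)`, the projection of `u` to `F·a` w.r.t. the axis `a`. -/
def IsProjCoeff (η : F) (a u : A) (c : F) : Prop :=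
  ∃ u0 ∈ eigSp F a 0, ∃ ue ∈ eigSp F a η, u = c • a + u0 + ue

/-- `e` is an identity element of the subalgebra `N`. -/
def IsIdentOf (N : NonUnitalSubalgebra F A) (e : A) : Prop :=
  e ∈ N ∧ ∀ z ∈ N, e * z = z

/-- `ψ` is an `F`-algebra automorphism of `A`. -/
structure IsAlgAut (ψ : A → A) : Prop where
  map_add : ∀ x y : A, ψ (x + y) = ψ x + ψ y
  map_smul : ∀ (c : F) (x : A), ψ (c • x) = c • ψ x
  map_mul : ∀ x y : A, ψ (x * y) = ψ x * ψ y
  bijective : Function.Bijective ψ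

/-- The graph `Δ_𝒜`: distinct axes are adjacent iff their product is nonzero. -/
def axesGraph (𝒜 : Set A) : SimpleGraph 𝒜 where
  Adj x y := x ≠ y ∧ (x : A) * (y : A) ≠ 0
  symm := by
    constructor
    rintro x y ⟨hxy, hm⟩
    exact ⟨hxy.symm, by rwa [mul_comm]⟩
  loopless := by constructor; rintro x ⟨h, -⟩; exact h rfl

/-- Multiplication of the Jordan algebra of Clifford type `J(V,B) = F·e ⊕ V`. -/
def cliffMul {V : Type*} [AddCommGroup V] [Module F V]
    (B : V →ₗ[F] V →ₗ[F] F) (x y : F × V) : F × V :=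
  (x.1 * y.1 + B x.2 y.2, x.1 • y.2 + y.1 • x.2)

end Prelim

/-- An isomorphism of `A` with a Jordan algebra of Clifford type `J(V,B)`. -/
structure CliffordTypeIso (F : Type u) (A : Type v) [Field F]
    [NonUnitalNonAssocCommRing A] [Module F A] [SMulCommClass F A A]
    [IsScalarTower F A A] where
  V : Type v
  [instAdd : AddCommGroup V]
  [instMod : Module F V]
  B : V →ₗ[F] V →ₗ[F] F
  symm : ∀ v w : V, B v w = B w v
  iso : A ≃ₗ[F] F × V
  mul_compat : ∀ x y : A, iso (x * y) = cliffMul F B (iso x) (iso y)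

theorem mul_mem_map_of_mul_mem {R M : Type*} [Semiring R] [NonUnitalNonAssocSemiring M]
    [Module R M] {e : M ≃ₗ[R] M} (he : ∀ x y, e (x * y) = e x * e y)
    {P Q N : Submodule R M} (h : ∀ x ∈ P, ∀ y ∈ Q, x * y ∈ N) :
    ∀ x ∈ P.map (e : M →ₗ[R] M), ∀ y ∈ Q.map (e : M →ₗ[R] M), x * y ∈ N.map (e : M →ₗ[R] M) := by
  rintro _ ⟨x, hx, rfl⟩ _ ⟨y, hy, rfl⟩
  exact ⟨x * y, h x hx y hy, he x y⟩

section

variable {F : Type u} {A : Type v} [Field F] [NonUnitalNonAssocCommRing A]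
  [Module F A] [SMulCommClass F A A] {η : F}

theorem mem_eigSp {a x : A} {l : F} : x ∈ eigSp F a l ↔ a * x = l • x := Iff.rfl

theorem eigSp_map (e : A ≃ₗ[F] A) (he : ∀ x y, e (x * y) = e x * e y) (a : A) (l : F) :
    eigSp F (e a) l = (eigSp F a l).map (e : A →ₗ[F] A) := by
  ext x
  obtain ⟨y, rfl⟩ := e.surjective x
  rw [Submodule.mem_map_equiv, LinearEquiv.symm_apply_apply, mem_eigSp, mem_eigSp, ← he,
    ← map_smul, e.injective.eq_iff]

namespace IsAxis

variable {a : A}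

theorem map (ha : IsAxis F η a) (e : A ≃ₗ[F] A) (he : ∀ x y, e (x * y) = e x * e y) :
    IsAxis F η (e a) where
  ne_zero := e.map_ne_zero_iff.mpr ha.ne_zero
  idem := by rw [← he, ha.idem]
  decomp := by
    simp only [eigSp_map e he, ← Submodule.map_sup, ha.decomp, Submodule.map_top,
      LinearEquiv.range]
  prim := by
    rw [eigSp_map e he, ha.prim, Submodule.map_span, Set.image_singleton]
    rfl
  f11 := by simpa only [eigSp_map e he] using mul_mem_map_of_mul_mem he ha.f11
  f00 := by simpa only [eigSp_map e he] using mul_mem_map_of_mul_mem he ha.f00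
  f10 := by
    simp only [eigSp_map e he]
    rintro _ ⟨x, hx, rfl⟩ _ ⟨y, hy, rfl⟩
    simp only [LinearEquiv.coe_coe, ← he, ha.f10 x hx y hy, map_zero]
  fpe := by
    simpa only [eigSp_map e he, ← Submodule.map_sup] using mul_mem_map_of_mul_mem he ha.fpe
  fee := by
    simpa only [eigSp_map e he, ← Submodule.map_sup] using mul_mem_map_of_mul_mem he ha.fee

theorem eq_zero_of_add_eq_zero (ha : IsAxis F η a) (hη0 : η ≠ 0) (hη1 : η ≠ 1) {c : F}
    {x₀ xη : A} (h₀ : x₀ ∈ eigSp F a 0) (hη : xη ∈ eigSp F a η) (h : c • a + x₀ + xη = 0) :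
    c = 0 ∧ x₀ = 0 ∧ xη = 0 := by
  have h₀' : a * x₀ = 0 := by simpa using mem_eigSp.mp h₀
  -- multiplying by `a` once and twice separates the three components
  have h₁ : c • a + η • xη = 0 := by
    simpa [mul_add, mul_smul_comm, ha.idem, h₀', mem_eigSp.mp hη] using congrArg (a * ·) h
  have h₂ : c • a + (η * η) • xη = 0 := by
    simpa [mul_add, mul_smul_comm, ha.idem, mem_eigSp.mp hη, smul_smul] using
      congrArg (a * ·) h₁
  have hxη : xη = 0 := by
    have : (η * (1 - η)) • xη = 0 := by
      rw [← sub_eq_zero.mpr (h₁.trans h₂.symm)]; module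
    exact (smul_eq_zero.mp this).resolve_left (mul_ne_zero hη0 (sub_ne_zero.mpr hη1.symm))
  have hc : c = 0 := by
    rw [hxη, smul_zero, add_zero] at h₁
    exact (smul_eq_zero.mp h₁).resolve_right ha.ne_zero
  subst hc hxη
  simpa using h

theorem isCompl (ha : IsAxis F η a) (hη0 : η ≠ 0) (hη1 : η ≠ 1) :
    IsCompl (eigSp F a 1 ⊔ eigSp F a 0) (eigSp F a η) := by
  refine ⟨Submodule.disjoint_def.mpr fun x hx hxη => ?_, codisjoint_iff.mpr ha.decomp⟩
  obtain ⟨_, hx₁, x₀, hx₀, rfl⟩ := Submodule.mem_sup.mp hx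
  obtain ⟨c, rfl⟩ := Submodule.mem_span_singleton.mp (ha.prim ▸ hx₁)
  obtain ⟨hc, hx₀', -⟩ := ha.eq_zero_of_add_eq_zero hη0 hη1 hx₀ (neg_mem hxη) (add_neg_cancel _)
  rw [hc, hx₀', zero_smul, add_zero]

theorem mul_mem_sup (ha : IsAxis F η a) {x y : A} (hx : x ∈ eigSp F a 1 ⊔ eigSp F a 0)
    (hy : y ∈ eigSp F a 1 ⊔ eigSp F a 0) : x * y ∈ eigSp F a 1 ⊔ eigSp F a 0 := by
  obtain ⟨x₁, hx₁, x₀, hx₀, rfl⟩ := Submodule.mem_sup.mp hx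
  obtain ⟨y₁, hy₁, y₀, hy₀, rfl⟩ := Submodule.mem_sup.mp hy
  have hxy : (x₁ + x₀) * (y₁ + y₀) = x₁ * y₁ + x₀ * y₀ := by
    rw [add_mul, mul_add, mul_add, ha.f10 x₁ hx₁ y₀ hy₀, mul_comm x₀, ha.f10 y₁ hy₁ x₀ hx₀]
    abel
  rw [hxy]
  exact add_mem (Submodule.mem_sup_left (ha.f11 _ hx₁ _ hy₁))
    (Submodule.mem_sup_right (ha.f00 _ hx₀ _ hy₀))

noncomputable def miyamoto (ha : IsAxis F η a) (hη0 : η ≠ 0) (hη1 : η ≠ 1) : A ≃ₗ[F] A :=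
  (Submodule.prodEquivOfIsCompl _ _ (ha.isCompl hη0 hη1)).symm ≪≫ₗ
    (LinearEquiv.refl F _).prodCongr (LinearEquiv.neg F) ≪≫ₗ
    Submodule.prodEquivOfIsCompl _ _ (ha.isCompl hη0 hη1)

theorem miyamoto_apply_of_mem_sup (ha : IsAxis F η a) (hη0 : η ≠ 0) (hη1 : η ≠ 1) {x : A}
    (hx : x ∈ eigSp F a 1 ⊔ eigSp F a 0) : ha.miyamoto hη0 hη1 x = x := by
  have h := Submodule.prodEquivOfIsCompl_symm_apply_left _ _ (ha.isCompl hη0 hη1) ⟨x, hx⟩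
  simp only at h
  simp [miyamoto, h]

theorem miyamoto_apply_of_mem_eigSp (ha : IsAxis F η a) (hη0 : η ≠ 0) (hη1 : η ≠ 1) {x : A}
    (hx : x ∈ eigSp F a η) : ha.miyamoto hη0 hη1 x = -x := by
  have h := Submodule.prodEquivOfIsCompl_symm_apply_right _ _ (ha.isCompl hη0 hη1) ⟨x, hx⟩
  simp only at h
  simp [miyamoto, h]

theorem miyamoto_mul (ha : IsAxis F η a) (hη0 : η ≠ 0) (hη1 : η ≠ 1) (x y : A) :
    ha.miyamoto hη0 hη1 (x * y) = ha.miyamoto hη0 hη1 x * ha.miyamoto hη0 hη1 y := by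
  have hdecomp : ∀ u : A, ∃ up ∈ eigSp F a 1 ⊔ eigSp F a 0, ∃ um ∈ eigSp F a η, up + um = u :=
    fun u => Submodule.mem_sup.mp (ha.decomp ▸ Submodule.mem_top)
  obtain ⟨xp, hxp, xm, hxm, rfl⟩ := hdecomp x
  obtain ⟨yp, hyp, ym, hym, rfl⟩ := hdecomp y
  -- the fusion rules make the splitting `A = (A₁ ⊕ A₀) ⊕ A_η` a `ℤ/2`-grading
  have heven : xp * yp + xm * ym ∈ eigSp F a 1 ⊔ eigSp F a 0 :=
    add_mem (ha.mul_mem_sup hxp hyp) (ha.fee _ hxm _ hym)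
  have hodd : xp * ym + xm * yp ∈ eigSp F a η :=
    add_mem (ha.fpe _ hxp _ hym) (mul_comm yp xm ▸ ha.fpe _ hyp _ hxm)
  have hfix {u : A} := ha.miyamoto_apply_of_mem_sup hη0 hη1 (x := u)
  have hneg {u : A} := ha.miyamoto_apply_of_mem_eigSp hη0 hη1 (x := u)
  calc ha.miyamoto hη0 hη1 ((xp + xm) * (yp + ym))
      = ha.miyamoto hη0 hη1 ((xp * yp + xm * ym) + (xp * ym + xm * yp)) := by
        congr 1; simp only [add_mul, mul_add]; abel
    _ = (xp * yp + xm * ym) - (xp * ym + xm * yp) := by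
        rw [map_add, hfix heven, hneg hodd, sub_eq_add_neg]
    _ = (xp - xm) * (yp - ym) := by simp only [sub_mul, mul_sub]; abel
    _ = ha.miyamoto hη0 hη1 (xp + xm) * ha.miyamoto hη0 hη1 (yp + ym) := by
        rw [map_add, map_add, hfix hxp, hfix hyp, hneg hxm, hneg hym, sub_eq_add_neg,
          sub_eq_add_neg]

end IsAxis

namespace IsProjCoeff

variable {a u v : A} {c d : F}

theorem add (hu : IsProjCoeff F η a u c) (hv : IsProjCoeff F η a v d) :
    IsProjCoeff F η a (u + v) (c + d) := by
  obtain ⟨u₀, hu₀, uη, huη, rfl⟩ := hu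
  obtain ⟨v₀, hv₀, vη, hvη, rfl⟩ := hv
  exact ⟨u₀ + v₀, add_mem hu₀ hv₀, uη + vη, add_mem huη hvη, by module⟩

theorem smul (hu : IsProjCoeff F η a u c) (r : F) : IsProjCoeff F η a (r • u) (r * c) := by
  obtain ⟨u₀, hu₀, uη, huη, rfl⟩ := hu
  exact ⟨r • u₀, Submodule.smul_mem _ r hu₀, r • uη, Submodule.smul_mem _ r huη, by module⟩

theorem mul_left (ha : IsAxis F η a) (hu : IsProjCoeff F η a u c) :
    IsProjCoeff F η a (a * u) c := by
  obtain ⟨u₀, hu₀, uη, huη, rfl⟩ := hu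
  refine ⟨0, zero_mem _, η • uη, Submodule.smul_mem _ η huη, ?_⟩
  rw [mul_add, mul_add, mul_smul_comm, ha.idem, mem_eigSp.mp hu₀, mem_eigSp.mp huη, zero_smul]

theorem mul_of_mem_zero (ha : IsAxis F η a) (hu : IsProjCoeff F η a u c) {x : A}
    (hx : x ∈ eigSp F a 0) : IsProjCoeff F η a (x * u) 0 := by
  obtain ⟨u₀, hu₀, uη, huη, rfl⟩ := hu
  refine ⟨x * u₀, ha.f00 x hx u₀ hu₀, x * uη, ha.fpe x (Submodule.mem_sup_right hx) uη huη, ?_⟩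
  rw [mul_add, mul_add, mul_smul_comm, mul_comm x a, mem_eigSp.mp hx, zero_smul, smul_zero,
    zero_smul, zero_add]

theorem mul_mul_eq (ha : IsAxis F η a) (hu : IsProjCoeff F η a u c) :
    a * (a * u) = ((1 - η) * c) • a + η • (a * u) := by
  obtain ⟨u₀, hu₀, uη, huη, rfl⟩ := hu
  simp only [mul_add, mul_smul_comm, ha.idem, mem_eigSp.mp hu₀, mem_eigSp.mp huη, zero_smul,
    mul_zero]
  module

theorem map (hu : IsProjCoeff F η a u c) (e : A ≃ₗ[F] A) (he : ∀ x y, e (x * y) = e x * e y) :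
    IsProjCoeff F η (e a) (e u) c := by
  obtain ⟨u₀, hu₀, uη, huη, rfl⟩ := hu
  refine ⟨e u₀, ?_, e uη, ?_, by rw [map_add, map_add, map_smul]⟩ <;>
    rw [eigSp_map e he] <;> exact Submodule.mem_map_of_mem ‹_›

end IsProjCoeff

theorem isProjCoeff_zero_of_mem_sup {a y : A} (hy : y ∈ eigSp F a 0 ⊔ eigSp F a η) :
    IsProjCoeff F η a y 0 := by
  obtain ⟨y₀, hy₀, yη, hyη, rfl⟩ := Submodule.mem_sup.mp hy
  exact ⟨y₀, hy₀, yη, hyη, by rw [zero_smul, zero_add]⟩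

theorem isProjCoeff_self (a : A) : IsProjCoeff F η a a 1 :=
  ⟨0, zero_mem _, 0, zero_mem _, by rw [one_smul, add_zero, add_zero]⟩

namespace IsAxis

variable {a : A}

theorem isProjCoeff_unique (ha : IsAxis F η a) (hη0 : η ≠ 0) (hη1 : η ≠ 1) {u : A} {c c' : F}
    (h : IsProjCoeff F η a u c) (h' : IsProjCoeff F η a u c') : c = c' := by
  obtain ⟨u₀, hu₀, uη, huη, rfl⟩ := h
  obtain ⟨u₀', hu₀', uη', huη', h'⟩ := h'
  have := ha.eq_zero_of_add_eq_zero hη0 hη1 (sub_mem hu₀ hu₀') (sub_mem huη huη')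
    (c := c - c') (by rw [sub_smul, ← sub_eq_zero.mpr h']; abel)
  exact sub_eq_zero.mp this.1

end IsAxis

section ProjCoeff

variable {φ : A → A → F} {a b : A}

theorem projCoeff_eq (hη0 : η ≠ 0) (hη1 : η ≠ 1)
    (hφ : ∀ a : A, IsAxis F η a → ∀ u : A, IsProjCoeff F η a u (φ a u))
    (ha : IsAxis F η a) {u : A} {c : F} (h : IsProjCoeff F η a u c) : φ a u = c :=
  ha.isProjCoeff_unique hη0 hη1 (hφ a ha u) h

def projCoeffLin (hη0 : η ≠ 0) (hη1 : η ≠ 1)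
    (hφ : ∀ a : A, IsAxis F η a → ∀ u : A, IsProjCoeff F η a u (φ a u))
    (ha : IsAxis F η a) : A →ₗ[F] F where
  toFun := φ a
  map_add' u v := projCoeff_eq hη0 hη1 hφ ha ((hφ a ha u).add (hφ a ha v))
  map_smul' r u := projCoeff_eq hη0 hη1 hφ ha ((hφ a ha u).smul r)

theorem projCoeff_mul_sub_eq_zero (hη0 : η ≠ 0) (hη1 : η ≠ 1)
    (hφ : ∀ a : A, IsAxis F η a → ∀ u : A, IsProjCoeff F η a u (φ a u))
    (ha : IsAxis F η a) (hb : IsAxis F η b) : φ a b * (φ a b - φ b a) = 0 := by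
  obtain ⟨b₀, hb₀, bη, hbη, hb_eq⟩ := hφ a ha b
  set p := φ a b
  set ℓ := projCoeffLin hη0 hη1 hφ ha
  have hℓ : ∀ {u : A} {c : F}, IsProjCoeff F η a u c → ℓ u = c := projCoeff_eq hη0 hη1 hφ ha
  have hℓ_mul : ∀ v, ℓ (b * v) = p * ℓ v + ℓ (bη * v) := by
    intro v
    rw [hb_eq, add_mul, add_mul, mul_comm (p • a), mul_smul_comm, mul_comm v, map_add, map_add,
      map_smul, smul_eq_mul, hℓ (((hφ a ha v).mul_left ha)), hℓ ((hφ a ha v).mul_of_mem_zero ha hb₀), add_zero]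
    rfl
  have hℓbη : ℓ bη = 0 := hℓ (isProjCoeff_zero_of_mem_sup (Submodule.mem_sup_right hbη))
  have hba : b * a = p • a + η • bη := by
    rw [mul_comm, hb_eq, mul_add, mul_add, mul_smul_comm, ha.idem, mem_eigSp.mp hb₀,
      mem_eigSp.mp hbη, zero_smul, add_zero]
  have hℓba : ℓ (b * a) = p := by
    rw [hba, map_add, map_smul, map_smul, hℓ (isProjCoeff_self a), hℓbη, smul_eq_mul,
      smul_eq_mul, mul_one, mul_zero, add_zero]
  have h_sq : p = p * p + ℓ (bη * bη) := calc
    p = ℓ (b * b) := by rw [hb.idem]; rfl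
    _ = p * p + ℓ (b * bη) := by rw [hℓ_mul, mul_comm bη]; rfl
    _ = p * p + ℓ (bη * bη) := by rw [hℓ_mul, hℓbη, mul_zero, zero_add]
  have h_cube : ℓ (b * (b * a)) = p * p + η * ℓ (bη * bη) := by
    rw [hℓ_mul, hℓba, hba, mul_add, mul_smul_comm, mul_smul_comm, mul_comm bη a,
      mem_eigSp.mp hbη, map_add, map_smul, map_smul, map_smul, hℓbη]
    simp only [smul_eq_mul, mul_zero, zero_add]
  have h_cube' : ℓ (b * (b * a)) = (1 - η) * φ b a * p + η * p := by
    rw [(hφ b hb a).mul_mul_eq hb, map_add, map_smul, map_smul, hℓba, smul_eq_mul, smul_eq_mul]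
    rfl
  have h1η : 1 - η ≠ 0 := sub_ne_zero.mpr hη1.symm
  have : (1 - η) * (p * (p - φ b a)) = 0 := by linear_combination η * h_sq - h_cube + h_cube'
  exact (mul_eq_zero.mp this).resolve_left h1η

theorem projCoeff_symm (hη0 : η ≠ 0) (hη1 : η ≠ 1)
    (hφ : ∀ a : A, IsAxis F η a → ∀ u : A, IsProjCoeff F η a u (φ a u))
    (ha : IsAxis F η a) (hb : IsAxis F η b) : φ a b = φ b a := by
  have hab := projCoeff_mul_sub_eq_zero hη0 hη1 hφ ha hb
  have hba := projCoeff_mul_sub_eq_zero hη0 hη1 hφ hb ha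
  have hsq : (φ a b - φ b a) ^ 2 = 0 := by linear_combination hab + hba
  exact sub_eq_zero.mp (pow_eq_zero_iff two_ne_zero |>.mp hsq)

theorem projCoeff_map (hη0 : η ≠ 0) (hη1 : η ≠ 1)
    (hφ : ∀ a : A, IsAxis F η a → ∀ u : A, IsProjCoeff F η a u (φ a u))
    (ha : IsAxis F η a) (e : A ≃ₗ[F] A) (he : ∀ x y, e (x * y) = e x * e y) (u : A) :
    φ (e a) (e u) = φ a u :=
  projCoeff_eq hη0 hη1 hφ (ha.map e he) ((hφ a ha u).map e he)

variable {ι : Type*} {Φ : A →ₗ[F] A →ₗ[F] F}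

theorem form_eq_projCoeff (hη0 : η ≠ 0) (hη1 : η ≠ 1)
    (hφ : ∀ a : A, IsAxis F η a → ∀ u : A, IsProjCoeff F η a u (φ a u))
    (bB : Module.Basis ι F A) (hax : ∀ i, IsAxis F η (bB i))
    (hΦ : ∀ i j, Φ (bB i) (bB j) = φ (bB i) (bB j)) (ha : IsAxis F η a) (u : A) :
    Φ a u = φ a u := by
  have hcol : ∀ j, Φ.flip (bB j) = projCoeffLin hη0 hη1 hφ (hax j) := fun j =>
    bB.ext fun i => (hΦ i j).trans (projCoeff_symm hη0 hη1 hφ (hax i) (hax j))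
  have hrow : Φ a = projCoeffLin hη0 hη1 hφ ha := bB.ext fun j =>
    (LinearMap.congr_fun (hcol j) a).trans (projCoeff_symm hη0 hη1 hφ (hax j) ha)
  exact LinearMap.congr_fun hrow u

theorem form_map (hη0 : η ≠ 0) (hη1 : η ≠ 1)
    (hφ : ∀ a : A, IsAxis F η a → ∀ u : A, IsProjCoeff F η a u (φ a u))
    (bB : Module.Basis ι F A) (hax : ∀ i, IsAxis F η (bB i))
    (hΦ : ∀ i j, Φ (bB i) (bB j) = φ (bB i) (bB j))
    (e : A ≃ₗ[F] A) (he : ∀ x y, e (x * y) = e x * e y) (u v : A) :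
    Φ (e u) (e v) = Φ u v := by
  have hinv : Φ.compl₁₂ (e : A →ₗ[F] A) (e : A →ₗ[F] A) = Φ :=
    LinearMap.ext_basis bB bB fun i j => by
      rw [LinearMap.compl₁₂_apply, LinearEquiv.coe_coe,
        form_eq_projCoeff hη0 hη1 hφ bB hax hΦ ((hax i).map e he),
        projCoeff_map hη0 hη1 hφ (hax i) e he, hΦ]
  exact LinearMap.congr_fun₂ hinv u v

end ProjCoeff

end

theorem eigenspaces_pairwise_orthogonal_general
    {F : Type u} {A : Type v} {ι : Type v} [Field F] [NonUnitalNonAssocCommRing A]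
    [Module F A] [SMulCommClass F A A]
    (hchar : (2 : F) ≠ 0) (η : F) (hη0 : η ≠ 0) (hη1 : η ≠ 1)
    (bB : Module.Basis ι F A) (hax : ∀ i : ι, IsAxis F η (bB i))
    (φ : A → A → F)
    (hφ : ∀ a : A, IsAxis F η a → ∀ u : A, IsProjCoeff F η a u (φ a u))
    (Φ : A →ₗ[F] A →ₗ[F] F)
    (hΦ : ∀ i j : ι, Φ (bB i) (bB j) = φ (bB i) (bB j)) :
    ∀ a : A, IsAxis F η a →
      (∀ x ∈ eigSp F a 1, ∀ y ∈ eigSp F a 0, Φ x y = 0) ∧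
      (∀ x ∈ eigSp F a 1, ∀ y ∈ eigSp F a η, Φ x y = 0) ∧
      (∀ x ∈ eigSp F a 0, ∀ y ∈ eigSp F a η, Φ x y = 0) := by
  intro a ha
  have hA₁ : ∀ x ∈ eigSp F a 1, ∀ y ∈ eigSp F a 0 ⊔ eigSp F a η, Φ x y = 0 := by
    intro x hx y hy
    obtain ⟨c, rfl⟩ := Submodule.mem_span_singleton.mp (ha.prim ▸ hx)
    rw [map_smul, LinearMap.smul_apply, form_eq_projCoeff hη0 hη1 hφ bB hax hΦ ha,
      projCoeff_eq hη0 hη1 hφ ha (isProjCoeff_zero_of_mem_sup hy), smul_zero]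
  refine ⟨fun x hx y hy => hA₁ x hx y (Submodule.mem_sup_left hy),
    fun x hx y hy => hA₁ x hx y (Submodule.mem_sup_right hy), fun x hx y hy => ?_⟩
  have h := form_map hη0 hη1 hφ bB hax hΦ _ (ha.miyamoto_mul hη0 hη1) x y
  rw [ha.miyamoto_apply_of_mem_sup hη0 hη1 (Submodule.mem_sup_right hx),
    ha.miyamoto_apply_of_mem_eigSp hη0 hη1 hy, map_neg] at h
  have h2 : (2 : F) * Φ x y = 0 := by linear_combination -h
  exact (mul_eq_zero.mp h2).resolve_left hchar

/-- Let `ℬ` be a basis of `A` consisting of `η`-axes and let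
`(·,·)` be the bilinear form determined by `(b, c) = φ_b(c)` for `b, c ∈ ℬ`.
Then for every `η`-axis `a`, the eigenspaces `A₁(a)`, `A₀(a)`, `A_η(a)` of
`ad_a` are pairwise orthogonal with respect to `(·,·)`. -/
theorem eigenspaces_pairwise_orthogonal
    {F : Type u} {A : Type v} {ι : Type v} [Field F] [NonUnitalNonAssocCommRing A]
    [Module F A] [SMulCommClass F A A] [IsScalarTower F A A]
    (hchar : (2 : F) ≠ 0) (η : F) (hη0 : η ≠ 0) (hη1 : η ≠ 1)
    (𝒜 : Set A) (h𝒜 : ∀ a ∈ 𝒜, IsAxis F η a)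
    (hgen : NonUnitalAlgebra.adjoin F 𝒜 = ⊤)
    (bB : Module.Basis ι F A) (hax : ∀ i : ι, IsAxis F η (bB i))
    (φ : A → A → F)
    (hφ : ∀ a : A, IsAxis F η a → ∀ u : A, IsProjCoeff F η a u (φ a u))
    (Φ : A →ₗ[F] A →ₗ[F] F)
    (hΦ : ∀ i j : ι, Φ (bB i) (bB j) = φ (bB i) (bB j)) :
    ∀ a : A, IsAxis F η a →
      (∀ x ∈ eigSp F a 1, ∀ y ∈ eigSp F a 0, Φ x y = 0) ∧
      (∀ x ∈ eigSp F a 1, ∀ y ∈ eigSp F a η, Φ x y = 0) ∧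
      (∀ x ∈ eigSp F a 0, ∀ y ∈ eigSp F a η, Φ x y = 0) :=
  eigenspaces_pairwise_orthogonal_general hchar η hη0 hη1 bB hax φ hφ Φ hΦ
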